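/- arXiv:2309.08385 — 3 statements merged into one kernel-verified Lean document; each statement's English description precedes it below -/
import Mathlib

section
/- Let n : ℕ, let A : Matrix (Fin n) (Fin n) ℝ be symmetric (Aᵀ = A), let L = 1 − A (the identity matrix minus A), let X : EuclideanSpace ℝ (Fin n), and let b : ℝ with b ≠ 0. Define J : EuclideanSpace ℝ (Fin n) → ℝ by J(Y) = ‖Y − X‖² + b * ⟪Y, L.mulVec Y⟫. Then one step of gradient descent started at Y = X with learning rate c = 1/(2b) yields the hypergraph signal shift: X − (1/(2*b)) • gradient J X = A.mulVec X. -/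
/-!
The gradient of `J(Y) = ‖Y - X‖² + b ⟪Y, L Y⟫` is `2 (Y - X) + b (L + Lᵀ) Y`, which is
`2 (Y - X) + 2 b L Y` for symmetric `L`. At `Y = X` only `2 b L X` survives, so the step of size
`1 / (2 b)` lands at `X - L X = A X`.
-/

open Matrix
open scoped RealInnerProductSpace

section GradientDescent

variable {F : Type*} [NormedAddCommGroup F] [InnerProductSpace ℝ F] [CompleteSpace F]

theorem HasGradientAt.add {f g : F → ℝ} {f' g' x : F} (hf : HasGradientAt f f' x)
    (hg : HasGradientAt g g' x) : HasGradientAt (fun y => f y + g y) (f' + g') x := by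
  rw [hasGradientAt_iff_hasFDerivAt, map_add] at *
  exact hf.fun_add hg

theorem HasGradientAt.const_mul {f : F → ℝ} {f' x : F} (c : ℝ) (hf : HasGradientAt f f' x) :
    HasGradientAt (fun y => c * f y) (c • f') x := by
  rw [hasGradientAt_iff_hasFDerivAt] at *
  simpa only [map_smul, smul_eq_mul] using hf.const_mul c

theorem hasGradientAt_norm_sub_sq (x₀ x : F) :
    HasGradientAt (fun y => ‖y - x₀‖ ^ 2) ((2 : ℝ) • (x - x₀)) x := by
  rw [hasGradientAt_iff_hasFDerivAt]
  refine ((hasFDerivAt_id x).sub_const x₀).norm_sq.congr_fderiv ?_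
  ext h
  simp

theorem hasGradientAt_inner_self_apply (T : F →L[ℝ] F) (x : F) :
    HasGradientAt (fun y => ⟪y, T y⟫) (T x + T.adjoint x) x := by
  rw [hasGradientAt_iff_hasFDerivAt]
  refine ((hasFDerivAt_id x).inner ℝ T.hasFDerivAt).congr_fderiv ?_
  ext h
  simp [ContinuousLinearMap.adjoint_inner_left, real_inner_comm, add_comm]

theorem IsSelfAdjoint.hasGradientAt_inner_self_apply {T : F →L[ℝ] F} (hT : IsSelfAdjoint T)
    (x : F) : HasGradientAt (fun y => ⟪y, T y⟫) ((2 : ℝ) • T x) x := by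
  simpa only [hT.adjoint_eq, two_smul] using _root_.hasGradientAt_inner_self_apply T x

def denoisingObjective (x₀ : F) (b : ℝ) (T : F →L[ℝ] F) (y : F) : ℝ :=
  ‖y - x₀‖ ^ 2 + b * ⟪y, T y⟫

theorem hasGradientAt_denoisingObjective {T : F →L[ℝ] F} (hT : IsSelfAdjoint T) (x₀ : F)
    (b : ℝ) (x : F) :
    HasGradientAt (denoisingObjective x₀ b T) ((2 : ℝ) • (x - x₀) + (2 * b) • T x) x := by
  rw [mul_comm, ← smul_smul]
  exact (hasGradientAt_norm_sub_sq x₀ x).add ((hT.hasGradientAt_inner_self_apply x).const_mul b)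

theorem gradient_denoisingObjective_self {T : F →L[ℝ] F} (hT : IsSelfAdjoint T) (x₀ : F)
    (b : ℝ) : gradient (denoisingObjective x₀ b T) x₀ = (2 * b) • T x₀ := by
  simpa only [sub_self, smul_zero, zero_add] using
    (hasGradientAt_denoisingObjective hT x₀ b x₀).gradient

theorem sub_smul_gradient_denoisingObjective_self {T : F →L[ℝ] F} (hT : IsSelfAdjoint T)
    (x₀ : F) {b : ℝ} (hb : b ≠ 0) :
    x₀ - (1 / (2 * b)) • gradient (denoisingObjective x₀ b T) x₀ = x₀ - T x₀ := by
  rw [gradient_denoisingObjective_self hT, smul_smul, one_div_mul_cancel (by positivity), one_smul]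

end GradientDescent

theorem Matrix.isSelfAdjoint_of_transpose_eq {n : Type*} {A : Matrix n n ℝ} (hA : Aᵀ = A) :
    IsSelfAdjoint A := by
  rw [← isHermitian_iff_isSelfAdjoint, IsHermitian, conjTranspose_eq_transpose_of_trivial, hA]

theorem shift_eq_one_step_gradient_descent
    (n : ℕ) (A : Matrix (Fin n) (Fin n) ℝ) (hA : Aᵀ = A)
    (L : Matrix (Fin n) (Fin n) ℝ) (hL : L = 1 - A)
    (X : EuclideanSpace ℝ (Fin n)) (b : ℝ) (hb : b ≠ 0)
    (J : EuclideanSpace ℝ (Fin n) → ℝ)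
    (hJ : J = fun Y : EuclideanSpace ℝ (Fin n) =>
        ‖Y - X‖ ^ 2 +
          b * (inner ℝ Y ((EuclideanSpace.equiv (Fin n) ℝ).symm (L.mulVec Y)) : ℝ)) :
    X - (1 / (2 * b)) • gradient J X
      = (EuclideanSpace.equiv (Fin n) ℝ).symm (A.mulVec X) := by
  set T := toEuclideanCLM (𝕜 := ℝ) A
  have hJT : J = denoisingObjective X b (1 - T) := by
    rw [hJ, hL, ← map_one (toEuclideanCLM (𝕜 := ℝ)), ← map_sub]
    -- `toEuclideanCLM L Y` unfolds to `(EuclideanSpace.equiv _ ℝ).symm (L *ᵥ Y)`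
    rfl
  have hT : IsSelfAdjoint T := (isSelfAdjoint_of_transpose_eq hA).map _
  rw [hJT, sub_smul_gradient_denoisingObjective_self ((IsSelfAdjoint.one _).sub hT) X hb,
    _root_.sub_apply, one_apply_eq_self, sub_sub_cancel]
  rfl
end

section
/- Let N n : ℕ and let A : Fin N → Matrix (Fin n) (Fin n) ℝ be matrices each of which is symmetric ((A k)ᵀ = A k for all k). Define v : ZMod (2*N+1) → Matrix (Fin n) (Fin n) ℝ on representatives j ∈ {0, 1, …, 2N} by: v 0 = 0; v j = (1/2) • A (j−1) for 1 ≤ j ≤ N; and v j = (1/2) • A (2N − j) for N+1 ≤ j ≤ 2N. Then (v (−i))ᵀ = v i for every i : ZMod (2*N+1), and consequently the block circulant matrix B : Matrix (ZMod (2*N+1) × Fin n) (ZMod (2*N+1) × Fin n) ℝ defined by B (i, p) (j, q) = v (i − j) p q is symmetric (Bᵀ = B). -/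
open Matrix

theorem symmetrized_slices_give_symmetric_bcirc
    (N n : ℕ) (A : Fin N → Matrix (Fin n) (Fin n) ℝ)
    (hA : ∀ k : Fin N, (A k)ᵀ = A k)
    (v : ZMod (2 * N + 1) → Matrix (Fin n) (Fin n) ℝ)
    (hv0 : v 0 = 0)
    (hv1 : ∀ (j : ℕ) (h1 : 1 ≤ j) (h2 : j ≤ N),
      v (j : ZMod (2 * N + 1)) = (1 / 2 : ℝ) • A ⟨j - 1, by omega⟩)
    (hv2 : ∀ (j : ℕ) (h1 : N + 1 ≤ j) (h2 : j ≤ 2 * N),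
      v (j : ZMod (2 * N + 1)) = (1 / 2 : ℝ) • A ⟨2 * N - j, by omega⟩)
    (B : Matrix (ZMod (2 * N + 1) × Fin n) (ZMod (2 * N + 1) × Fin n) ℝ)
    (hB : ∀ (i j : ZMod (2 * N + 1)) (p q : Fin n), B (i, p) (j, q) = v (i - j) p q) :
    (∀ i : ZMod (2 * N + 1), (v (-i))ᵀ = v i) ∧ Bᵀ = B := by
  have key : ∀ i : ZMod (2 * N + 1), (v (-i))ᵀ = v i := by
    intro i
    have hklt : i.val < 2 * N + 1 := ZMod.val_lt i
    have hi : ((i.val : ℕ) : ZMod (2 * N + 1)) = i := by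
      rw [ZMod.natCast_val, ZMod.cast_id]
    rcases Nat.eq_zero_or_pos i.val with h0 | hpos
    · have hiz : i = 0 := by rw [← hi, h0]; simp
      rw [hiz]; simp [hv0]
    · have hneg : -i = ((2 * N + 1 - i.val : ℕ) : ZMod (2 * N + 1)) := by
        have h : i.val + (2 * N + 1 - i.val) = 2 * N + 1 := by omega
        have h2 : ((i.val : ℕ) : ZMod (2 * N + 1)) +
            ((2 * N + 1 - i.val : ℕ) : ZMod (2 * N + 1)) = 0 := by
          rw [← Nat.cast_add, h, ZMod.natCast_self]
        rw [hi] at h2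
        exact neg_eq_of_add_eq_zero_right h2
      by_cases hN : i.val ≤ N
      · have h1 := hv1 i.val hpos hN
        rw [hi] at h1
        rw [hneg, hv2 (2 * N + 1 - i.val) (by omega) (by omega), h1,
          Matrix.transpose_smul, hA]
        exact congrArg _ (congrArg A (Fin.ext (by simp; omega)))
      · have h1 := hv2 i.val (by omega) (by omega)
        rw [hi] at h1
        rw [hneg, hv1 (2 * N + 1 - i.val) (by omega) (by omega), h1,
          Matrix.transpose_smul, hA]
        exact congrArg _ (congrArg A (Fin.ext (by simp; omega)))
  refine ⟨key, ?_⟩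
  ext ⟨i, p⟩ ⟨j, q⟩
  rw [Matrix.transpose_apply, hB, hB]
  have h := key (i - j)
  rw [neg_sub] at h
  rw [← h]
  rfl
end

section
/- Let V be a finite type, let E : Finset (Finset V) be a set of hyperedges such that every e ∈ E is nonempty, and let M : ℕ with M ≥ 1 and e.card ≤ M for every e ∈ E. For v : V let d(v) := (E.filter (fun e => v ∈ e)).card be the degree of v, and for e ∈ E let α(e) := the number of functions f : Fin M → V with Set.range f = ↑e. Define the normalized adjacency entries a : (Fin M → V) → ℝ by: a p = (e.card : ℝ) / ((d (p 0) : ℝ) * (α e : ℝ)) if there exists e ∈ E with Set.range p = ↑e (such e is unique since it equals the image of p), and a p = 0 otherwise. Then for every v : V with 0 < d v, the row sum over all index tuples with first entry v equals one: ∑_{p : Fin M → V with p 0 = v} a p = 1. -/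
/-!
Split the row of `v` according to the hyperedge `e = {p₀, …, p_{M-1}}` spanned by the tuple.
Composing tuples with the transposition of two vertices of `e` shows that the number of tuples
spanning `e` with a prescribed first entry does not depend on which vertex of `e` is prescribed,
so it equals `α(e) / |e|`. Each of the `d(v)` hyperedges through `v` thus contributes
`(α(e) / |e|) · |e| / (d(v) α(e)) = 1 / d(v)`; here `α(e) ≠ 0` because `|e| ≤ M`.
-/

open Finset

section TupleCount

variable {ι V : Type*} [Fintype ι] [DecidableEq V]

lemma range_eq_coe_iff_image_univ_eq (p : ι → V) (e : Finset V) :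
    Set.range p = ↑e ↔ univ.image p = e := by
  rw [← coe_inj, coe_image, coe_univ, Set.image_univ]

lemma image_swap_of_mem {e : Finset V} {w w' : V} (hw : w ∈ e) (hw' : w' ∈ e) :
    e.image (Equiv.swap w w') = e := by
  rw [← coe_inj, coe_image]
  exact (Equiv.swap_bijOn_self (iff_of_true hw hw')).image_eq

lemma exists_image_univ_eq {e : Finset V} (he : e.Nonempty) (hcard : #e ≤ Fintype.card ι) :
    ∃ p : ι → V, univ.image p = e := by
  have : Nonempty e := he.to_subtype
  obtain ⟨emb⟩ : Nonempty (e ↪ ι) :=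
    Function.Embedding.nonempty_of_card_le (by rwa [Fintype.card_coe])
  refine ⟨Subtype.val ∘ Function.invFun emb, ?_⟩
  rw [← image_image, image_univ_of_surjective (Function.invFun_surjective emb.injective)]
  simp

variable [DecidableEq ι] [Fintype V]

lemma card_tuples_apply_eq_of_mem (i₀ : ι) {e : Finset V} {w w' : V} (hw : w ∈ e)
    (hw' : w' ∈ e) :
    #{p : ι → V | p i₀ = w ∧ univ.image p = e} = #{p : ι → V | p i₀ = w' ∧ univ.image p = e} := by
  have himage (p : ι → V) (hp : univ.image p = e) : univ.image (Equiv.swap w w' ∘ p) = e := by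
    rw [← image_image, hp, image_swap_of_mem hw hw']
  refine card_nbij' (Equiv.swap w w' ∘ ·) (Equiv.swap w w' ∘ ·) ?_ ?_ ?_ ?_ <;> intro p hp
  all_goals simp only [coe_filter, mem_univ, true_and, Set.mem_ofPred_eq] at hp ⊢
  · exact ⟨by simp [hp.1], himage p hp.2⟩
  · exact ⟨by simp [hp.1], himage p hp.2⟩
  all_goals simp [Function.comp_def]

lemma card_tuples_image_eq_card_mul (i₀ : ι) {e : Finset V} {w : V} (hw : w ∈ e) :
    #{p : ι → V | univ.image p = e} = #e * #{p : ι → V | p i₀ = w ∧ univ.image p = e} := by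
  have hmaps : (({p : ι → V | univ.image p = e} : Finset _) : Set (ι → V)).MapsTo (· i₀) e := by
    intro p hp
    simp only [coe_filter, mem_univ, true_and, Set.mem_ofPred_eq] at hp
    exact hp ▸ mem_image_of_mem p (mem_univ i₀)
  rw [card_eq_sum_card_fiberwise hmaps, ← smul_eq_mul, ← sum_const]
  refine sum_congr rfl fun w' hw' => ?_
  rw [filter_filter, ← card_tuples_apply_eq_of_mem i₀ hw' hw]
  simp only [and_comm]

lemma card_tuples_apply_eq_ne_zero (i₀ : ι) {e : Finset V} {w : V} (hw : w ∈ e)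
    (hcard : #e ≤ Fintype.card ι) :
    #{p : ι → V | p i₀ = w ∧ univ.image p = e} ≠ 0 := by
  obtain ⟨p, hp⟩ := exists_image_univ_eq ⟨w, hw⟩ hcard
  have hne : #{p : ι → V | univ.image p = e} ≠ 0 := card_ne_zero.2 ⟨p, by simpa using hp⟩
  exact right_ne_zero_of_mul (card_tuples_image_eq_card_mul i₀ hw ▸ hne)

end TupleCount

open scoped Classical in
theorem normalized_adjacency_row_sum_one_general
    (V : Type*) [Fintype V] [DecidableEq V]
    (E : Finset (Finset V))
    (M : ℕ) (hM : 1 ≤ M) (hcard : ∀ e ∈ E, e.card ≤ M)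
    (d : V → ℕ) (hd : ∀ v : V, d v = (E.filter (fun e => v ∈ e)).card)
    (α : Finset V → ℕ)
    (hα : ∀ e : Finset V, α e = Fintype.card {f : Fin M → V // Set.range f = ↑e})
    (a : (Fin M → V) → ℝ)
    (ha : ∀ p : Fin M → V,
      a p = if ∃ e ∈ E, Set.range p = ↑e
            then ((Finset.image p Finset.univ).card : ℝ) /
                   ((d (p ⟨0, hM⟩) : ℝ) * (α (Finset.image p Finset.univ) : ℝ))
            else 0) :
    ∀ v : V, 0 < d v →
      ∑ p ∈ Finset.univ.filter (fun p : Fin M → V => p ⟨0, hM⟩ = v), a p = 1 := by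
  intro v hv
  set i₀ : Fin M := ⟨0, hM⟩
  have hα' (e : Finset V) : α e = #{p : Fin M → V | univ.image p = e} := by
    rw [hα, Fintype.card_subtype]
    simp only [range_eq_coe_iff_image_univ_eq]
  have ha' (p : Fin M → V) : a p = if univ.image p ∈ E
      then (#(univ.image p) : ℝ) / (d (p i₀) * α (univ.image p)) else 0 := by
    simp only [ha, range_eq_coe_iff_image_univ_eq, exists_eq_right']
  have hedge (e : Finset V) (he : e ∈ E) (hve : v ∈ e) :
      ∑ p with p i₀ = v ∧ univ.image p = e, a p = 1 / d v := by
    have hconst : ∀ p ∈ ({p | p i₀ = v ∧ univ.image p = e} : Finset (Fin M → V)),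
        a p = #e / (d v * α e) := by
      intro p hp
      rw [mem_filter] at hp
      rw [ha', hp.2.2, if_pos he, hp.2.1]
    have hN := card_tuples_apply_eq_ne_zero i₀ hve ((hcard e he).trans (Fintype.card_fin M).ge)
    have he_ne : #e ≠ 0 := card_ne_zero.2 ⟨v, hve⟩
    rw [sum_congr rfl hconst, sum_const, nsmul_eq_mul, hα', card_tuples_image_eq_card_mul i₀ hve]
    push_cast
    field_simp
  have hoff (e : Finset V) (he : e ∉ E.filter (v ∈ ·)) :
      ∑ p with p i₀ = v ∧ univ.image p = e, a p = 0 := by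
    refine sum_eq_zero fun p hp => ?_
    obtain ⟨-, hpv, rfl⟩ := mem_filter.1 hp
    have hvp : v ∈ univ.image p := hpv ▸ mem_image_of_mem p (mem_univ i₀)
    rw [ha', if_neg fun hpE => he (mem_filter.2 ⟨hpE, hvp⟩)]
  calc ∑ p with p i₀ = v, a p
      = ∑ e, ∑ p with p i₀ = v ∧ univ.image p = e, a p := by
        simp only [← filter_filter, sum_fiberwise]
    _ = ∑ e ∈ E with v ∈ e, ∑ p with p i₀ = v ∧ univ.image p = e, a p :=
        (sum_subset (subset_univ _) fun e _ he => hoff e he).symm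
    _ = ∑ e ∈ E with v ∈ e, 1 / (d v : ℝ) :=
        sum_congr rfl fun e he => hedge e (mem_filter.1 he).1 (mem_filter.1 he).2
    _ = 1 := by
        rw [sum_const, ← hd, nsmul_eq_mul]
        field_simp

open scoped Classical in
theorem normalized_adjacency_row_sum_one
    (V : Type*) [Fintype V] [DecidableEq V]
    (E : Finset (Finset V)) (hE : ∀ e ∈ E, e.Nonempty)
    (M : ℕ) (hM : 1 ≤ M) (hcard : ∀ e ∈ E, e.card ≤ M)
    (d : V → ℕ) (hd : ∀ v : V, d v = (E.filter (fun e => v ∈ e)).card)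
    (α : Finset V → ℕ)
    (hα : ∀ e : Finset V, α e = Fintype.card {f : Fin M → V // Set.range f = ↑e})
    (a : (Fin M → V) → ℝ)
    (ha : ∀ p : Fin M → V,
      a p = if ∃ e ∈ E, Set.range p = ↑e
            then ((Finset.image p Finset.univ).card : ℝ) /
                   ((d (p ⟨0, hM⟩) : ℝ) * (α (Finset.image p Finset.univ) : ℝ))
            else 0) :
    ∀ v : V, 0 < d v →
      ∑ p ∈ Finset.univ.filter (fun p : Fin M → V => p ⟨0, hM⟩ = v), a p = 1 :=
  normalized_adjacency_row_sum_one_general V E M hM hcard d hd α hα a ha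
end
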